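/- For integers 1 \le r \le n, the median m of the Beta(r, n-r+1) distribution, defined by I_m(r, n-r+1) = 1/2 where I is the regularized incomplete beta function, satisfies |m - (r - 1/3)/(n + 1/3)| < 1/(n+1) (the Hyndman-Fan approximation bound, for 2 \le r \le n-1). -/

import Mathlib

open MeasureTheory Filter

/-- The Beta function `B(a,b) = ∫₀¹ t^(a-1) (1-t)^(b-1) dt`. -/
noncomputable def betaFun (a b : ℝ) : ℝ :=
  ∫ t in (0:ℝ)..1, t ^ (a - 1) * (1 - t) ^ (b - 1)

/-- The regularized incomplete beta function `I_p(a,b)`. -/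
noncomputable def regIncBeta (a b p : ℝ) : ℝ :=
  (∫ t in (0:ℝ)..p, t ^ (a - 1) * (1 - t) ^ (b - 1)) / betaFun a b

/-!
Write `a = r - 1`, `b = n - r`, so that the distribution is Beta(a + 1, b + 1), with density
proportional to `f s = s ^ a * (1 - s) ^ b`, mode `a / (a + b) = (r - 1) / (n - 1)` and mean
`(a + 1) / (a + b + 2) = r / (n + 1)`. Both lie within `1 / (n + 1)` of `(r - 1/3) / (n + 1/3)`,
so it suffices that the median lies between the mode and the mean. By the symmetry `s ↦ 1 - s`
we may take `a ≤ b`. At the mode `M`, the derivative of `t ↦ log f (M + t) - log f (M - t)` has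
the sign of `b - a`, so `f (M - t) ≤ f (M + t)` and at most half of the mass lies left of `M`.
At the mean `μ` the same log-ratio first decreases and then increases, so `f (μ + t) - f (μ - t)`
changes sign exactly once, at some `t₁`; integrating against the weight `1 - t / t₁` and using
`∫ (μ - s) f s ds = 0` shows that at least half of the mass lies left of `μ`.
-/

open Set intervalIntegral

theorem integral_left_le_integral_right_of_reflect_le {f : ℝ → ℝ} (hf : Continuous f) {x : ℝ}
    (hx : 0 ≤ x) (hx1 : 2 * x ≤ 1) (hf0 : ∀ s ∈ Icc (2 * x) 1, 0 ≤ f s)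
    (hrefl : ∀ t ∈ Icc 0 x, f (x - t) ≤ f (x + t)) :
    ∫ s in 0..x, f s ≤ ∫ s in x..1, f s := by
  calc ∫ s in 0..x, f s = ∫ t in 0..x, f (x - t) := by simp
    _ ≤ ∫ t in 0..x, f (x + t) := integral_mono_on hx
        (Continuous.intervalIntegrable (by fun_prop) _ _)
        (Continuous.intervalIntegrable (by fun_prop) _ _) hrefl
    _ = ∫ s in x..2 * x, f s := by rw [integral_comp_add_left]; ring_nf
    _ ≤ ∫ s in x..1, f s := by
        rw [← integral_add_adjacent_intervals (hf.intervalIntegrable x (2 * x))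
          (hf.intervalIntegrable _ 1)]
        exact le_add_of_nonneg_right (integral_nonneg hx1 hf0)

theorem integral_right_le_integral_left_of_single_crossing {f : ℝ → ℝ} (hf : Continuous f)
    {μ t₁ : ℝ} (ht₁ : 0 < t₁) (ht₁μ : t₁ ≤ μ) (hμ : 2 * μ ≤ 1)
    (hf0 : ∀ s ∈ Icc (2 * μ) 1, 0 ≤ f s) (hmean : ∫ s in 0..1, (μ - s) * f s = 0)
    (hleft : ∀ t ∈ Icc 0 t₁, f (μ + t) ≤ f (μ - t))
    (hright : ∀ t ∈ Icc t₁ μ, f (μ - t) ≤ f (μ + t)) :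
    ∫ s in μ..1, f s ≤ ∫ s in 0..μ, f s := by
  -- Adding `1 / t₁` times the mean identity trades the weight `1` for `1 - t / t₁`, which has the
  -- same sign pattern as `f (μ - t) - f (μ + t)`.
  have hweight : ∀ c (g : ℝ → ℝ), Continuous g →
      ∫ t in 0..c, g t = (∫ t in 0..c, (1 - t / t₁) * g t) + (∫ t in 0..c, t * g t) / t₁ := by
    intro c g hg
    rw [← intervalIntegral.integral_div, ← intervalIntegral.integral_add]
    · congr 1; ext t; field_simp; ring
    all_goals exact Continuous.intervalIntegrable (by fun_prop) _ _
  have hmean' : ∫ t in 0..μ, t * f (μ - t) = ∫ t in 0..1 - μ, t * f (μ + t) := by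
    rw [← integral_add_adjacent_intervals (b := μ) (Continuous.intervalIntegrable (by fun_prop) _ _)
      (Continuous.intervalIntegrable (by fun_prop) _ _)] at hmean
    have hl := integral_comp_sub_left (fun s => (μ - s) * f s) μ (a := 0) (b := μ)
    have hr := integral_comp_add_left (fun s => (μ - s) * f s) μ (a := 0) (b := 1 - μ)
    simp only [sub_sub_cancel, sub_self, sub_zero, add_zero, add_sub_cancel, sub_add_cancel_left,
      neg_mul, intervalIntegral.integral_neg] at hl hr
    linarith
  have hcore : ∫ t in 0..μ, (1 - t / t₁) * f (μ + t) ≤ ∫ t in 0..μ, (1 - t / t₁) * f (μ - t) := by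
    refine integral_mono_on (by linarith) (Continuous.intervalIntegrable (by fun_prop) _ _)
      (Continuous.intervalIntegrable (by fun_prop) _ _) fun t ht => ?_
    rcases le_total t t₁ with h | h
    · exact mul_le_mul_of_nonneg_left (hleft t ⟨ht.1, h⟩)
        (by rw [sub_nonneg, div_le_one ht₁]; exact h)
    · exact mul_le_mul_of_nonpos_left (hright t ⟨h, ht.2⟩)
        (by rw [sub_nonpos, one_le_div ht₁]; exact h)
  have htail : ∫ t in μ..1 - μ, (1 - t / t₁) * f (μ + t) ≤ 0 := by
    rw [← neg_nonneg, ← intervalIntegral.integral_neg]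
    refine integral_nonneg (by linarith) fun t ht => ?_
    have hwt : 1 - t / t₁ ≤ 0 := by rw [sub_nonpos, one_le_div ht₁]; linarith [ht.1]
    have hft := hf0 (μ + t) ⟨by linarith [ht.1], by linarith [ht.2]⟩
    nlinarith
  have hw : Continuous fun t => (1 - t / t₁) * f (μ + t) := by fun_prop
  have hsplit : ∫ t in 0..1 - μ, (1 - t / t₁) * f (μ + t) =
      (∫ t in 0..μ, (1 - t / t₁) * f (μ + t)) + ∫ t in μ..1 - μ, (1 - t / t₁) * f (μ + t) :=
    (integral_add_adjacent_intervals (hw.intervalIntegrable _ _) (hw.intervalIntegrable _ _)).symm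
  have hR := hweight (1 - μ) (fun t => f (μ + t)) (by fun_prop)
  have hL := hweight μ (fun t => f (μ - t)) (by fun_prop)
  calc ∫ s in μ..1, f s = ∫ t in 0..1 - μ, f (μ + t) := by simp
    _ ≤ ∫ t in 0..μ, f (μ - t) := by rw [hR, hL, hmean']; linarith
    _ = ∫ s in 0..μ, f s := by simp

-- The exponents are the Beta parameters minus one.
noncomputable def betaDensity (a b : ℕ) (s : ℝ) : ℝ := s ^ a * (1 - s) ^ b

noncomputable def betaMode (a b : ℕ) : ℝ := a / (a + b)

noncomputable def betaMean (a b : ℕ) : ℝ := (a + 1) / (a + b + 2)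

section
variable (a b : ℕ)

@[fun_prop]
lemma continuous_betaDensity : Continuous (betaDensity a b) := by
  unfold betaDensity; fun_prop

lemma intervalIntegrable_betaDensity (x y : ℝ) :
    IntervalIntegrable (betaDensity a b) volume x y :=
  (continuous_betaDensity a b).intervalIntegrable x y

lemma betaDensity_nonneg {s : ℝ} (h0 : 0 ≤ s) (h1 : s ≤ 1) : 0 ≤ betaDensity a b s := by
  have : 0 ≤ 1 - s := by linarith
  unfold betaDensity; positivity

lemma betaDensity_pos {s : ℝ} (h0 : 0 < s) (h1 : s < 1) : 0 < betaDensity a b s := by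
  have : 0 < 1 - s := by linarith
  unfold betaDensity; positivity

lemma betaDensity_zero {a : ℕ} (ha : a ≠ 0) : betaDensity a b 0 = 0 := by
  simp [betaDensity, ha]

lemma betaDensity_one_sub (s : ℝ) : betaDensity a b (1 - s) = betaDensity b a s := by
  simp [betaDensity, mul_comm]

lemma integral_betaDensity_pos {x y : ℝ} (h0 : 0 ≤ x) (hxy : x < y) (h1 : y ≤ 1) :
    0 < ∫ s in x..y, betaDensity a b s :=
  intervalIntegral_pos_of_pos_on (intervalIntegrable_betaDensity a b x y)
    (fun _ hs => betaDensity_pos a b (h0.trans_lt hs.1) (hs.2.trans_le h1)) hxy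

lemma strictMonoOn_integral_betaDensity :
    StrictMonoOn (fun x => ∫ s in 0..x, betaDensity a b s) (Icc 0 1) := by
  intro x hx y hy hxy
  dsimp only
  rw [← integral_add_adjacent_intervals (intervalIntegrable_betaDensity a b 0 x)
    (intervalIntegrable_betaDensity a b x y)]
  linarith [integral_betaDensity_pos a b hx.1 hxy hy.2]

lemma integral_betaDensity_swap (x y : ℝ) :
    ∫ s in x..y, betaDensity b a s = ∫ s in 1 - y..1 - x, betaDensity a b s := by
  simp_rw [← betaDensity_one_sub a b]
  exact integral_comp_sub_left (betaDensity a b) 1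

lemma hasDerivAt_betaDensity_succ (s : ℝ) :
    HasDerivAt (betaDensity (a + 1) (b + 1)) ((a + 1 - (a + b + 2) * s) * betaDensity a b s) s := by
  refine ((hasDerivAt_pow (a + 1) s).mul
    ((hasDerivAt_pow (b + 1) (1 - s)).comp s ((hasDerivAt_id s).const_sub 1))).congr_deriv ?_
  simp only [betaDensity, Function.comp_apply, add_tsub_cancel_right]
  push_cast; ring

lemma integral_betaMean_sub_mul_betaDensity :
    ∫ s in 0..1, (betaMean a b - s) * betaDensity a b s = 0 := by
  have h := integral_eq_sub_of_hasDerivAt (fun s _ => hasDerivAt_betaDensity_succ a b s)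
    (Continuous.intervalIntegrable (by fun_prop) 0 1)
  have h1 : betaDensity (a + 1) (b + 1) 1 = 0 := by simp [betaDensity]
  rw [h1, betaDensity_zero _ (Nat.succ_ne_zero _), sub_zero] at h
  calc ∫ s in 0..1, (betaMean a b - s) * betaDensity a b s
      = (∫ s in 0..1, (a + 1 - (a + b + 2) * s) * betaDensity a b s) / (a + b + 2) := by
        rw [← intervalIntegral.integral_div]
        congr 1; ext s; unfold betaMean; field_simp
    _ = 0 := by rw [h, zero_div]

noncomputable def logBetaDensity (a b : ℕ) (s : ℝ) : ℝ := a * Real.log s + b * Real.log (1 - s)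

lemma log_betaDensity {s : ℝ} (hs : s ∈ Ioo 0 1) :
    Real.log (betaDensity a b s) = logBetaDensity a b s := by
  have h1 : 0 < 1 - s := by linarith [hs.2]
  rw [betaDensity, Real.log_mul (pow_pos hs.1 a).ne' (pow_pos h1 b).ne', Real.log_pow,
    Real.log_pow, logBetaDensity]

lemma betaDensity_le_betaDensity_iff {s s' : ℝ} (hs : s ∈ Ioo 0 1) (hs' : s' ∈ Ioo 0 1) :
    betaDensity a b s ≤ betaDensity a b s' ↔ logBetaDensity a b s ≤ logBetaDensity a b s' := by
  rw [← log_betaDensity a b hs, ← log_betaDensity a b hs',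
    Real.log_le_log_iff (betaDensity_pos a b hs.1 hs.2) (betaDensity_pos a b hs'.1 hs'.2)]

lemma hasDerivAt_logBetaDensity {s : ℝ} (hs : s ∈ Ioo 0 1) :
    HasDerivAt (logBetaDensity a b) (a / s - b / (1 - s)) s := by
  have h1 : 1 - s ≠ 0 := by linarith [hs.2]
  have h := ((Real.hasDerivAt_log hs.1.ne').const_mul (a : ℝ)).add
    (((Real.hasDerivAt_log h1).comp s ((hasDerivAt_id s).const_sub 1)).const_mul (b : ℝ))
  refine h.congr_deriv ?_
  field_simp
  ring

noncomputable def betaLogRatio (a b : ℕ) (x t : ℝ) : ℝ :=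
  logBetaDensity a b (x + t) - logBetaDensity a b (x - t)

lemma betaLogRatio_zero (x : ℝ) : betaLogRatio a b x 0 = 0 := by
  simp [betaLogRatio]

variable {a b} {x : ℝ}

lemma add_and_sub_mem_Ioo_zero_one (hx : 2 * x ≤ 1) {t : ℝ} (ht : t ∈ Ioo (-x) x) :
    x + t ∈ Ioo 0 1 ∧ x - t ∈ Ioo 0 1 := by
  obtain ⟨h1, h2⟩ := ht
  exact ⟨⟨by linarith, by linarith⟩, ⟨by linarith, by linarith⟩⟩

lemma betaDensity_sub_le_add_iff (hx : 2 * x ≤ 1) {t : ℝ} (ht : t ∈ Ioo (-x) x) :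
    betaDensity a b (x - t) ≤ betaDensity a b (x + t) ↔ 0 ≤ betaLogRatio a b x t := by
  obtain ⟨hp, hm⟩ := add_and_sub_mem_Ioo_zero_one hx ht
  rw [betaDensity_le_betaDensity_iff a b hm hp, betaLogRatio, sub_nonneg]

lemma betaDensity_add_le_sub_iff (hx : 2 * x ≤ 1) {t : ℝ} (ht : t ∈ Ioo (-x) x) :
    betaDensity a b (x + t) ≤ betaDensity a b (x - t) ↔ betaLogRatio a b x t ≤ 0 := by
  obtain ⟨hp, hm⟩ := add_and_sub_mem_Ioo_zero_one hx ht
  rw [betaDensity_le_betaDensity_iff a b hp hm, betaLogRatio, sub_nonpos]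

lemma hasDerivAt_betaLogRatio (hx : 2 * x ≤ 1) {t : ℝ} (ht : t ∈ Ioo (-x) x) :
    HasDerivAt (betaLogRatio a b x)
      (2 * (a * x * ((1 - x) ^ 2 - t ^ 2) - b * (1 - x) * (x ^ 2 - t ^ 2)) /
        ((x ^ 2 - t ^ 2) * ((1 - x) ^ 2 - t ^ 2))) t := by
  obtain ⟨hp, hm⟩ := add_and_sub_mem_Ioo_zero_one hx ht
  have h := ((hasDerivAt_logBetaDensity a b hp).comp t ((hasDerivAt_id t).const_add x)).sub
    ((hasDerivAt_logBetaDensity a b hm).comp t ((hasDerivAt_id t).const_sub x))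
  refine h.congr_deriv ?_
  have h1 : x + t ≠ 0 := hp.1.ne'
  have h2 : 1 - (x + t) ≠ 0 := by linarith [hp.2]
  have h3 : x - t ≠ 0 := hm.1.ne'
  have h4 : 1 - (x - t) ≠ 0 := by linarith [hm.2]
  have e1 : x ^ 2 - t ^ 2 = (x + t) * (x - t) := by ring
  have e2 : (1 - x) ^ 2 - t ^ 2 = (1 - (x + t)) * (1 - (x - t)) := by ring
  rw [e1, e2]
  field_simp
  ring

lemma mul_sq_sub_sq_pos (hx : 2 * x ≤ 1) {t : ℝ} (ht : t ∈ Ioo (-x) x) :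
    0 < (x ^ 2 - t ^ 2) * ((1 - x) ^ 2 - t ^ 2) := by
  obtain ⟨hp, hm⟩ := add_and_sub_mem_Ioo_zero_one hx ht
  have e : (x ^ 2 - t ^ 2) * ((1 - x) ^ 2 - t ^ 2) =
      ((x + t) * (x - t)) * ((1 - (x + t)) * (1 - (x - t))) := by ring
  rw [e]
  exact mul_pos (mul_pos hp.1 hm.1) (mul_pos (by linarith [hp.2]) (by linarith [hm.2]))

lemma monotoneOn_betaLogRatio {S : Set ℝ} (hS : Convex ℝ S) (hx : 2 * x ≤ 1)
    (hSx : S ⊆ Ioo (-x) x)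
    (hnum : ∀ t ∈ interior S, 0 ≤ a * x * ((1 - x) ^ 2 - t ^ 2) - b * (1 - x) * (x ^ 2 - t ^ 2)) :
    MonotoneOn (betaLogRatio a b x) S :=
  monotoneOn_of_hasDerivWithinAt_nonneg hS
    (fun t ht => (hasDerivAt_betaLogRatio hx (hSx ht)).continuousAt.continuousWithinAt)
    (fun t ht => (hasDerivAt_betaLogRatio hx (hSx (interior_subset ht))).hasDerivWithinAt)
    (fun t ht => div_nonneg (by linarith [hnum t ht])
      (mul_sq_sub_sq_pos hx (hSx (interior_subset ht))).le)

lemma antitoneOn_betaLogRatio {S : Set ℝ} (hS : Convex ℝ S) (hx : 2 * x ≤ 1)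
    (hSx : S ⊆ Ioo (-x) x)
    (hnum : ∀ t ∈ interior S, a * x * ((1 - x) ^ 2 - t ^ 2) - b * (1 - x) * (x ^ 2 - t ^ 2) ≤ 0) :
    AntitoneOn (betaLogRatio a b x) S :=
  antitoneOn_of_hasDerivWithinAt_nonpos hS
    (fun t ht => (hasDerivAt_betaLogRatio hx (hSx ht)).continuousAt.continuousWithinAt)
    (fun t ht => (hasDerivAt_betaLogRatio hx (hSx (interior_subset ht))).hasDerivWithinAt)
    (fun t ht => div_nonpos_of_nonpos_of_nonneg (by linarith [hnum t ht])
      (mul_sq_sub_sq_pos hx (hSx (interior_subset ht))).le)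

lemma betaMode_pos (ha : 0 < a) : 0 < betaMode a b := by
  unfold betaMode; positivity

lemma two_mul_betaMode_le_one (hab : a ≤ b) : 2 * betaMode a b ≤ 1 := by
  have hab' : (a : ℝ) ≤ b := by exact_mod_cast hab
  unfold betaMode
  rw [mul_div_assoc']
  exact div_le_one_of_le₀ (by linarith) (by positivity)

lemma betaMean_pos : 0 < betaMean a b := by
  unfold betaMean; positivity

lemma two_mul_betaMean_le_one (hab : a ≤ b) : 2 * betaMean a b ≤ 1 := by
  have hab' : (a : ℝ) ≤ b := by exact_mod_cast hab
  unfold betaMean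
  rw [mul_div_assoc']
  exact div_le_one_of_le₀ (by linarith) (by positivity)

lemma two_mul_betaMean_lt_one (hab : a < b) : 2 * betaMean a b < 1 := by
  have hab' : (a : ℝ) + 1 ≤ b := by exact_mod_cast hab
  unfold betaMean
  rw [mul_div_assoc', div_lt_one (by positivity)]
  linarith

lemma betaDensity_betaMode_sub_le_add (ha : 0 < a) (hab : a ≤ b) {t : ℝ}
    (ht : t ∈ Icc 0 (betaMode a b)) :
    betaDensity a b (betaMode a b - t) ≤ betaDensity a b (betaMode a b + t) := by
  set M := betaMode a b with hM
  have hM0 : 0 < M := betaMode_pos ha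
  have hM2 : 2 * M ≤ 1 := two_mul_betaMode_le_one hab
  have hMeq : M * (a + b) = a := by rw [hM, betaMode]; field_simp
  rcases ht.2.lt_or_eq with htM | htM
  · rw [betaDensity_sub_le_add_iff hM2 ⟨by linarith [ht.1], htM⟩, ← betaLogRatio_zero a b M]
    refine monotoneOn_betaLogRatio (convex_Ico 0 M) hM2 (fun s hs => ⟨by linarith [hs.1], hs.2⟩)
      (fun s _ => ?_) ⟨le_rfl, hM0⟩ ⟨ht.1, htM⟩ ht.1
    have hab' : (a : ℝ) ≤ b := by exact_mod_cast hab
    have hnum :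
        a * M * ((1 - M) ^ 2 - s ^ 2) - b * (1 - M) * (M ^ 2 - s ^ 2) = (b - a) * s ^ 2 := by
      linear_combination (M ^ 2 - M - s ^ 2) * hMeq
    rw [hnum]
    exact mul_nonneg (by linarith) (sq_nonneg s)
  · rw [htM, sub_self, betaDensity_zero _ ha.ne']
    exact betaDensity_nonneg a b (by linarith) (by linarith)

lemma exists_betaLogRatio_betaMean_valley (ha : 0 < a) (hab : a < b) :
    ∃ t₀ ∈ Ioo 0 (betaMean a b), AntitoneOn (betaLogRatio a b (betaMean a b)) (Icc 0 t₀) ∧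
      MonotoneOn (betaLogRatio a b (betaMean a b)) (Ico t₀ (betaMean a b)) := by
  set μ := betaMean a b with hμ
  have ha' : (1 : ℝ) ≤ a := by exact_mod_cast ha
  have hμ0 : 0 < μ := betaMean_pos
  have hμK : μ * (a + b + 2) = a + 1 := by rw [hμ, betaMean]; field_simp
  have hμ2 : 2 * μ < 1 := two_mul_betaMean_lt_one hab
  have hnum : ∀ s : ℝ, a * μ * ((1 - μ) ^ 2 - s ^ 2) - b * (1 - μ) * (μ ^ 2 - s ^ 2) =
      (1 - 2 * μ) * ((a + b + 1) * s ^ 2 - μ * (1 - μ)) := by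
    intro s
    linear_combination (s ^ 2 - μ + μ ^ 2) * hμK
  have hvar : 0 < μ * (1 - μ) := mul_pos hμ0 (by linarith)
  set t₀ := Real.sqrt (μ * (1 - μ) / (a + b + 1)) with ht₀
  have ht₀sq : (a + b + 1) * t₀ ^ 2 = μ * (1 - μ) := by
    rw [ht₀, Real.sq_sqrt (by positivity)]; field_simp
  have ht₀0 : 0 < t₀ := Real.sqrt_pos.2 (by positivity)
  have ht₀μ : t₀ < μ := by
    rw [ht₀, Real.sqrt_lt' hμ0, div_lt_iff₀ (by positivity)]
    nlinarith
  refine ⟨t₀, ⟨ht₀0, ht₀μ⟩, antitoneOn_betaLogRatio (convex_Icc 0 t₀) hμ2.le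
    (fun s hs => ⟨by linarith [hs.1], by linarith [hs.2]⟩) (fun s hs => ?_),
    monotoneOn_betaLogRatio (convex_Ico t₀ μ) hμ2.le
    (fun s hs => ⟨by linarith [hs.1], hs.2⟩) (fun s hs => ?_)⟩
  · rw [interior_Icc] at hs
    rw [hnum]
    have hs2 : s ^ 2 < t₀ ^ 2 := pow_lt_pow_left₀ hs.2 hs.1.le two_ne_zero
    exact mul_nonpos_of_nonneg_of_nonpos (by linarith) (by nlinarith)
  · rw [interior_Ico] at hs
    rw [hnum]
    have hs2 : t₀ ^ 2 < s ^ 2 := pow_lt_pow_left₀ hs.1 ht₀0.le two_ne_zero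
    exact mul_nonneg (by linarith) (by nlinarith)

lemma exists_betaDensity_crossing_of_lt (ha : 0 < a) (hab : a < b) :
    ∃ t₁ ∈ Ioc 0 (betaMean a b),
      (∀ t ∈ Icc 0 t₁, betaDensity a b (betaMean a b + t) ≤ betaDensity a b (betaMean a b - t)) ∧
      ∀ t ∈ Icc t₁ (betaMean a b),
        betaDensity a b (betaMean a b - t) ≤ betaDensity a b (betaMean a b + t) := by
  obtain ⟨t₀, ⟨ht₀, ht₀μ⟩, hanti, hmono⟩ := exists_betaLogRatio_betaMean_valley ha hab
  set μ := betaMean a b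
  have hμ2 : 2 * μ ≤ 1 := two_mul_betaMean_le_one hab.le
  have hIoo : ∀ t ∈ Ico 0 μ, t ∈ Ioo (-μ) μ := fun t ht => ⟨by linarith [ht.1, ht₀], ht.2⟩
  have hfar : betaDensity a b (μ - μ) < betaDensity a b (μ + μ) := by
    have h2μ : 2 * μ < 1 := two_mul_betaMean_lt_one hab
    rw [sub_self, betaDensity_zero _ ha.ne']
    exact betaDensity_pos a b (by linarith) (by linarith)
  have hnear : betaDensity a b (μ + t₀) ≤ betaDensity a b (μ - t₀) :=
    (betaDensity_add_le_sub_iff hμ2 (hIoo t₀ ⟨ht₀.le, ht₀μ⟩)).2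
      ((hanti ⟨le_rfl, ht₀.le⟩ ⟨ht₀.le, le_rfl⟩ ht₀.le).trans_eq (betaLogRatio_zero a b μ))
  have hD : Continuous fun t => betaDensity a b (μ - t) - betaDensity a b (μ + t) := by fun_prop
  obtain ⟨t₁, ⟨ht₀t₁, ht₁μ⟩, hcross⟩ := intermediate_value_Icc' ht₀μ.le hD.continuousOn
    (show (0 : ℝ) ∈ Icc _ _ from ⟨by linarith, by linarith⟩)
  have ht₁μ : t₁ < μ := ht₁μ.lt_of_ne (by rintro rfl; linarith)
  have hIoo₁ := hIoo t₁ ⟨ht₀.le.trans ht₀t₁, ht₁μ⟩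
  have hG₁ : betaLogRatio a b μ t₁ = 0 :=
    le_antisymm ((betaDensity_add_le_sub_iff hμ2 hIoo₁).1 (by linarith))
      ((betaDensity_sub_le_add_iff hμ2 hIoo₁).1 (by linarith))
  refine ⟨t₁, ⟨ht₀.trans_le ht₀t₁, ht₁μ.le⟩, fun t ht => ?_, fun t ht => ?_⟩
  · rw [betaDensity_add_le_sub_iff hμ2 (hIoo t ⟨ht.1, ht.2.trans_lt ht₁μ⟩)]
    rcases le_total t t₀ with h | h
    · exact (hanti ⟨le_rfl, ht₀.le⟩ ⟨ht.1, h⟩ ht.1).trans_eq (betaLogRatio_zero a b μ)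
    · exact (hmono ⟨h, ht.2.trans_lt ht₁μ⟩ ⟨ht₀t₁, ht₁μ⟩ ht.2).trans_eq hG₁
  · rcases ht.2.lt_or_eq with htμ | htμ
    · rw [betaDensity_sub_le_add_iff hμ2 (hIoo t ⟨by linarith [ht.1], htμ⟩)]
      exact hG₁.symm.le.trans (hmono ⟨ht₀t₁, ht₁μ⟩ ⟨ht₀t₁.trans ht.1, htμ⟩ ht.1)
    · rw [htμ]; exact hfar.le

lemma exists_betaDensity_crossing (ha : 0 < a) (hab : a ≤ b) :
    ∃ t₁ ∈ Ioc 0 (betaMean a b),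
      (∀ t ∈ Icc 0 t₁, betaDensity a b (betaMean a b + t) ≤ betaDensity a b (betaMean a b - t)) ∧
      ∀ t ∈ Icc t₁ (betaMean a b),
        betaDensity a b (betaMean a b - t) ≤ betaDensity a b (betaMean a b + t) := by
  rcases hab.lt_or_eq with hab | rfl
  · exact exists_betaDensity_crossing_of_lt ha hab
  · have hμ : betaMean a a = 1 / 2 := by unfold betaMean; field_simp; ring
    have hsymm : ∀ t, betaDensity a a (1 / 2 + t) = betaDensity a a (1 / 2 - t) := fun t => by
      rw [← betaDensity_one_sub]; ring_nf
    refine ⟨betaMean a a, ⟨betaMean_pos, le_rfl⟩, fun t _ => ?_, fun t _ => ?_⟩ <;> rw [hμ, hsymm]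

lemma betaMode_le_median (ha : 0 < a) (hab : a ≤ b) {m : ℝ} (hm : m ∈ Icc 0 1)
    (hmed : 2 * ∫ s in 0..m, betaDensity a b s = ∫ s in 0..1, betaDensity a b s) :
    betaMode a b ≤ m := by
  have hM0 := betaMode_pos (b := b) ha
  have hM2 := two_mul_betaMode_le_one hab
  have hhalf := integral_left_le_integral_right_of_reflect_le (continuous_betaDensity a b) hM0.le
    hM2 (fun s hs => betaDensity_nonneg a b (by linarith [hs.1]) hs.2)
    (fun t ht => betaDensity_betaMode_sub_le_add ha hab ht)
  have hsplit := integral_add_adjacent_intervals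
    (intervalIntegrable_betaDensity a b 0 (betaMode a b))
    (intervalIntegrable_betaDensity a b (betaMode a b) 1)
  refine ((strictMonoOn_integral_betaDensity a b).le_iff_le ⟨hM0.le, by linarith⟩ hm).1 ?_
  linarith

lemma median_le_betaMean (ha : 0 < a) (hab : a ≤ b) {m : ℝ} (hm : m ∈ Icc 0 1)
    (hmed : 2 * ∫ s in 0..m, betaDensity a b s = ∫ s in 0..1, betaDensity a b s) :
    m ≤ betaMean a b := by
  obtain ⟨t₁, ⟨ht₁, ht₁μ⟩, hleft, hright⟩ := exists_betaDensity_crossing ha hab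
  have hμ0 := betaMean_pos (a := a) (b := b)
  have hμ2 := two_mul_betaMean_le_one hab
  have hhalf := integral_right_le_integral_left_of_single_crossing (continuous_betaDensity a b)
    ht₁ ht₁μ hμ2 (fun s hs => betaDensity_nonneg a b (by linarith [hs.1]) hs.2)
    (integral_betaMean_sub_mul_betaDensity a b) hleft hright
  have hsplit := integral_add_adjacent_intervals
    (intervalIntegrable_betaDensity a b 0 (betaMean a b))
    (intervalIntegrable_betaDensity a b (betaMean a b) 1)
  refine ((strictMonoOn_integral_betaDensity a b).le_iff_le hm ⟨hμ0.le, by linarith⟩).1 ?_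
  linarith

lemma one_sub_betaMode (h : 0 < a + b) : 1 - betaMode b a = betaMode a b := by
  have h' : (a : ℝ) + b ≠ 0 := by norm_cast; omega
  unfold betaMode
  rw [add_comm (b : ℝ)]
  field_simp
  ring

lemma one_sub_betaMean : 1 - betaMean b a = betaMean a b := by
  unfold betaMean; field_simp; ring

theorem median_mem_uIcc_betaMode_betaMean (ha : 0 < a) (hb : 0 < b) {m : ℝ} (hm : m ∈ Icc 0 1)
    (hmed : 2 * ∫ s in 0..m, betaDensity a b s = ∫ s in 0..1, betaDensity a b s) :
    m ∈ uIcc (betaMode a b) (betaMean a b) := by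
  rcases le_total a b with hab | hba
  · exact mem_uIcc_of_le (betaMode_le_median ha hab hm hmed) (median_le_betaMean ha hab hm hmed)
  · have hm' : 1 - m ∈ Icc 0 1 := ⟨by linarith [hm.2], by linarith [hm.1]⟩
    have hsplit := integral_add_adjacent_intervals
      (intervalIntegrable_betaDensity a b 0 m)
      (intervalIntegrable_betaDensity a b m 1)
    have hmed' : 2 * ∫ s in 0..1 - m, betaDensity b a s = ∫ s in 0..1, betaDensity b a s := by
      rw [integral_betaDensity_swap a b, integral_betaDensity_swap a b]
      simp only [sub_sub_cancel, sub_zero, sub_self]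
      linarith
    have hmode := betaMode_le_median hb hba hm' hmed'
    have hmean := median_le_betaMean hb hba hm' hmed'
    rw [← one_sub_betaMode (by omega), ← one_sub_betaMean]
    exact mem_uIcc_of_ge (by linarith) (by linarith)

end

lemma abs_betaMode_sub_lt {a b : ℕ} (h : 0 < a + b) :
    |betaMode a b - (a + 2 / 3) / (a + b + 4 / 3)| < 1 / (a + b + 2) := by
  have hN : (0 : ℝ) < a + b := by exact_mod_cast h
  have hdiff : betaMode a b - (a + 2 / 3) / (a + b + 4 / 3) =
      2 * (a - b) / ((a + b) * (3 * (a + b) + 4)) := by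
    unfold betaMode; field_simp; ring
  have hab : |2 * ((a : ℝ) - b)| ≤ 2 * (a + b) := abs_le.2 ⟨by linarith, by linarith⟩
  have hden : (0 : ℝ) < (a + b) * (3 * (a + b) + 4) := by positivity
  rw [hdiff, abs_div, abs_of_pos hden, div_lt_div_iff₀ hden (by positivity)]
  nlinarith

lemma abs_betaMean_sub_lt (a b : ℕ) :
    |betaMean a b - (a + 2 / 3) / (a + b + 4 / 3)| < 1 / (a + b + 2) := by
  have hdiff : betaMean a b - (a + 2 / 3) / (a + b + 4 / 3) =
      (b - a) / ((a + b + 2) * (3 * (a + b) + 4)) := by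
    unfold betaMean; field_simp; ring
  have hab : |(b : ℝ) - a| ≤ a + b := abs_le.2 ⟨by linarith, by linarith⟩
  have hden : (0 : ℝ) < (a + b + 2) * (3 * (a + b) + 4) := by positivity
  rw [hdiff, abs_div, abs_of_pos hden, div_lt_div_iff₀ hden (by positivity)]
  nlinarith

lemma regIncBeta_natCast_add_one (a b : ℕ) (p : ℝ) :
    regIncBeta (a + 1) (b + 1) p =
      (∫ s in 0..p, betaDensity a b s) / ∫ s in 0..1, betaDensity a b s := by
  simp only [regIncBeta, betaFun, add_sub_cancel_right, Real.rpow_natCast, betaDensity]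

/-- For `2 ≤ r ≤ n-1`, the median `m` of the Beta(r, n-r+1) distribution, characterized by
`I_m(r, n-r+1) = 1/2`, satisfies the Hyndman–Fan approximation bound
`|m - (r - 1/3)/(n + 1/3)| < 1/(n+1)`. -/
theorem beta_median_hyndman_fan (n r : ℕ) (hr : 2 ≤ r) (hrn : r ≤ n - 1)
    (m : ℝ) (hm : m ∈ Set.Ioo (0:ℝ) 1)
    (hmed : regIncBeta (r : ℝ) ((n : ℝ) - r + 1) m = 1 / 2) :
    |m - ((r : ℝ) - 1/3) / ((n : ℝ) + 1/3)| < 1 / ((n : ℝ) + 1) := by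
  obtain ⟨a, rfl⟩ : ∃ a, r = a + 1 := ⟨r - 1, by omega⟩
  obtain ⟨b, rfl⟩ : ∃ b, n = a + b + 1 := ⟨n - a - 1, by omega⟩
  have hmed' : 2 * ∫ s in 0..m, betaDensity a b s = ∫ s in 0..1, betaDensity a b s := by
    have hb : ((a + b + 1 : ℕ) : ℝ) - ((a + 1 : ℕ) : ℝ) + 1 = b + 1 := by push_cast; ring
    rw [hb, Nat.cast_add_one, regIncBeta_natCast_add_one,
      div_eq_iff (integral_betaDensity_pos a b le_rfl one_pos le_rfl).ne'] at hmed
    linarith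
  have hmem := median_mem_uIcc_betaMode_betaMean (by omega) (by omega) (Ioo_subset_Icc_self hm)
    hmed'
  have hc : ((a + 1 : ℕ) : ℝ) - 1 / 3 = a + 2 / 3 := by push_cast; ring
  have hn : ((a + b + 1 : ℕ) : ℝ) + 1 / 3 = a + b + 4 / 3 := by push_cast; ring
  have hδ : ((a + b + 1 : ℕ) : ℝ) + 1 = a + b + 2 := by push_cast; ring
  rw [hc, hn, hδ, ← Real.dist_eq, ← Metric.mem_ball]
  refine (convex_ball _ _).ordConnected.uIcc_subset ?_ ?_ hmem
  · rw [Metric.mem_ball, Real.dist_eq]; exact abs_betaMode_sub_lt (by omega)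
  · rw [Metric.mem_ball, Real.dist_eq]; exact abs_betaMean_sub_lt a b
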